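/- arXiv:2207.02591 — 2 statements merged into one kernel-verified Lean document; each statement's English description precedes it below -/
import Mathlib

section
/- Let t ≥ 1 be an integer and let w be a complex number with 0 < |w| < 1. For integers p, m define Θ_{p,m} := ∑_{(r,s)∈ℤ², r≢s (mod 2)} sg(r,s)·(-1)^{(r-s-1)/2} w^{r² + 2(4t-1)rs + s² + 4(p+m)r + 4(p-m)s}, where sg(r,s) = (sgn*(r)+sgn*(s))/2 with sgn*(x)=1 if x≥0 and -1 otherwise (the series converges absolutely). Then Θ_{p,m} = w^{8(p+t)} · Θ_{p+2t,m}. -/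
def sgnStar (r : ℤ) : ℤ := if 0 ≤ r then 1 else -1

/-- `sg(r,s) = (sgn*(r)+sgn*(s))/2` as a complex number. -/
noncomputable def sg (r s : ℤ) : ℂ := ((sgnStar r + sgnStar s : ℤ) : ℂ) / 2

/-- `Θ_{p,m}` written with `w = q^{1/8}`. -/
noncomputable def ThetaPM (t : ℤ) (w : ℂ) (p m : ℤ) : ℂ :=
  ∑' rs : {rs : ℤ × ℤ // rs.1 % 2 ≠ rs.2 % 2},
    sg (rs : ℤ × ℤ).1 (rs : ℤ × ℤ).2 *
      (-1 : ℂ) ^ (((rs : ℤ × ℤ).1 - (rs : ℤ × ℤ).2 - 1) / 2) *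
      w ^ ((rs : ℤ × ℤ).1^2 + 2*(4*t-1)*(rs : ℤ × ℤ).1*(rs : ℤ × ℤ).2 + (rs : ℤ × ℤ).2^2
            + 4*(p+m)*(rs : ℤ × ℤ).1 + 4*(p-m)*(rs : ℤ × ℤ).2)

namespace Stmt12aux

def Eexp (t p m : ℤ) (rs : ℤ × ℤ) : ℤ :=
  rs.1^2 + 2*(4*t-1)*rs.1*rs.2 + rs.2^2 + 4*(p+m)*rs.1 + 4*(p-m)*rs.2

noncomputable def F (t : ℤ) (w : ℂ) (p m : ℤ) (rs : ℤ × ℤ) : ℂ :=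
  if rs.1 % 2 ≠ rs.2 % 2 then
    sg rs.1 rs.2 * (-1 : ℂ) ^ ((rs.1 - rs.2 - 1) / 2) * w ^ Eexp t p m rs else 0

noncomputable def B1 (w : ℂ) (p m : ℤ) (rs : ℤ × ℤ) : ℂ :=
  if rs.1 = 0 ∧ rs.2 % 2 ≠ 0 then
    (-1 : ℂ) ^ ((-rs.2 - 1) / 2) * w ^ (rs.2^2 + 4*(p-m)*rs.2) else 0

noncomputable def B2 (w : ℂ) (p m : ℤ) (rs : ℤ × ℤ) : ℂ :=
  if rs.2 = 0 ∧ rs.1 % 2 ≠ 0 then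
    (-1 : ℂ) ^ ((rs.1 - 1) / 2) * w ^ (rs.1^2 + 4*(p+m)*rs.1) else 0

lemma theta_eq (t : ℤ) (w : ℂ) (p m : ℤ) :
    ThetaPM t w p m = ∑' rs : ℤ × ℤ, F t w p m rs := by
  rw [ThetaPM]
  erw [tsum_subtype {rs : ℤ × ℤ | rs.1 % 2 ≠ rs.2 % 2}
      (fun rs => sg rs.1 rs.2 * (-1 : ℂ) ^ ((rs.1 - rs.2 - 1) / 2) * w ^ Eexp t p m rs)]
  refine tsum_congr fun rs => ?_
  by_cases h : rs.1 % 2 = rs.2 % 2 <;> simp [F, Set.indicator, h]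

lemma one_dim_bound (a r : ℤ) : |r| - (|a|+1)^2 ≤ r^2 + a*r := by
  rcases abs_cases a with ⟨ha, _⟩ | ⟨ha, _⟩ <;> rcases abs_cases r with ⟨hr, hr0⟩ | ⟨hr, hr0⟩ <;>
    rw [ha, hr] <;> nlinarith [sq_nonneg (r - a - 1), sq_nonneg (r + a + 1),
      sq_nonneg (r - a + 1), sq_nonneg (r + a - 1), sq_nonneg r, sq_nonneg a]

lemma quad_lower (t a b r s : ℤ) (ht : 1 ≤ t) (hrs : 0 ≤ r * s) :
    |r| + |s| - ((|a|+1)^2 + (|b|+1)^2) ≤ r^2 + 2*(4*t-1)*r*s + s^2 + a*r + b*s := by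
  have h1 := one_dim_bound a r
  have h2 := one_dim_bound b s
  have h3 : 0 ≤ 2*(4*t-1)*(r*s) := mul_nonneg (by linarith) hrs
  nlinarith

lemma summable_geom_int {x : ℝ} (hx0 : 0 ≤ x) (hx1 : x < 1) :
    Summable (fun n : ℤ => x ^ n.natAbs) := by
  refine Summable.of_nat_of_neg ?_ ?_ <;>
    · simp only [Int.natAbs_natCast, Int.natAbs_neg]
      exact summable_geometric_of_lt_one hx0 hx1

lemma summable_majorant {x : ℝ} (hx0 : 0 ≤ x) (hx1 : x < 1) (c : ℝ) :
    Summable (fun rs : ℤ × ℤ => c * (x ^ rs.1.natAbs * x ^ rs.2.natAbs)) := by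
  have h : Summable (fun rs : ℤ × ℤ => x ^ rs.1.natAbs * x ^ rs.2.natAbs) := by
    apply Summable.mul_of_nonneg (summable_geom_int hx0 hx1) (summable_geom_int hx0 hx1)
      (fun n => pow_nonneg hx0 _) (fun n => pow_nonneg hx0 _)
  exact h.mul_left c

lemma norm_sg_le (r s : ℤ) : ‖sg r s‖ ≤ 1 := by
  rw [sg, sgnStar, sgnStar]
  split_ifs <;> norm_num

lemma sg_ne_zero_mul_nonneg (r s : ℤ) (h : sg r s ≠ 0) : 0 ≤ r * s := by
  rw [sg, sgnStar, sgnStar] at h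
  split_ifs at h with h1 h2 h2
  · exact mul_nonneg h1 h2
  · norm_num at h
  · norm_num at h
  · exact le_of_lt (mul_pos_of_neg_of_neg (by omega) (by omega))

lemma summable_F (t : ℤ) (ht : 1 ≤ t) (w : ℂ) (hw0 : 0 < ‖w‖)
    (hw1 : ‖w‖ < 1) (p m : ℤ) : Summable (F t w p m) := by
  set x := ‖w‖ with hx
  set C : ℤ := (|4*(p+m)|+1)^2 + (|4*(p-m)|+1)^2 with hC
  apply Summable.of_norm_bounded (summable_majorant hw0.le hw1 (x ^ (-C)))
  rintro ⟨r, s⟩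
  by_cases h : r % 2 ≠ s % 2
  swap
  · simp only [F, if_neg h, norm_zero]; positivity
  rw [show F t w p m (r, s) = sg r s * (-1 : ℂ) ^ ((r - s - 1) / 2) * w ^ Eexp t p m (r, s)
    from if_pos h]
  by_cases hsg : sg r s = 0
  · simp only [hsg, zero_mul, norm_zero]; positivity
  have hrs : 0 ≤ r * s := sg_ne_zero_mul_nonneg r s hsg
  have hEb : |r| + |s| - C ≤ Eexp t p m (r, s) := by
    have h2 := quad_lower t (4*(p+m)) (4*(p-m)) r s ht hrs
    rw [← hC] at h2
    simpa [Eexp] using h2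
  calc ‖sg r s * (-1:ℂ) ^ ((r - s - 1)/2) * w ^ Eexp t p m (r,s)‖
      = ‖sg r s‖ * ‖(-1:ℂ) ^ ((r - s - 1)/2)‖ * ‖w ^ Eexp t p m (r,s)‖ := by
        rw [norm_mul, norm_mul]
    _ ≤ 1 * 1 * x ^ Eexp t p m (r,s) := by
        have h1 : ‖(-1:ℂ) ^ ((r - s - 1)/2)‖ = 1 := by
          rw [norm_zpow]; norm_num
        rw [h1, norm_zpow]
        gcongr
        exact norm_sg_le r s
    _ ≤ x ^ (|r| + |s| - C) := by
        rw [one_mul, one_mul]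
        exact zpow_le_zpow_right_of_le_one₀ hw0 hw1.le hEb
    _ = x ^ (-C) * (x ^ r.natAbs * x ^ s.natAbs) := by
        rw [show |r| + |s| - C = -C + ((r.natAbs:ℤ) + (s.natAbs:ℤ)) by
          rw [Int.abs_eq_natAbs, Int.abs_eq_natAbs]; ring]
        rw [zpow_add₀ (ne_of_gt hw0), zpow_add₀ (ne_of_gt hw0), zpow_natCast, zpow_natCast]

lemma sg_sub (r s : ℤ) (h : r % 2 ≠ s % 2) :
    sg r s = sg (r-1) (s-1) + (if r = 0 then 1 else 0) + (if s = 0 then 1 else 0) := by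
  rw [sg, sg, sgnStar, sgnStar, sgnStar, sgnStar]
  split_ifs <;> first | (exfalso; omega) | norm_num

lemma decomp (t : ℤ) (w : ℂ) (hw : w ≠ 0) (p m : ℤ) (rs : ℤ × ℤ) :
    F t w p m rs = w ^ (8*(p+t)) * F t w (p+2*t) m (rs.1 - 1, rs.2 - 1)
      + B1 w p m rs + B2 w p m rs := by
  obtain ⟨r, s⟩ := rs
  by_cases h : r % 2 = s % 2
  · have hF : F t w p m (r, s) = 0 := if_neg (by simpa using h)
    have hF' : F t w (p+2*t) m (r-1, s-1) = 0 := if_neg (by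
      show ¬((r-1) % 2 ≠ (s-1) % 2); omega)
    have hB1 : B1 w p m (r, s) = 0 := if_neg (by rintro ⟨h0, h1⟩; omega)
    have hB2 : B2 w p m (r, s) = 0 := if_neg (by rintro ⟨h0, h1⟩; omega)
    rw [hF, hF', hB1, hB2]; ring
  · have hpar' : (r-1) % 2 ≠ (s-1) % 2 := by omega
    have hE : Eexp t p m (r, s) = 8*(p+t) + Eexp t (p+2*t) m (r-1, s-1) := by
      simp only [Eexp]; ring
    have hk : (r - 1 - (s - 1) - 1) / 2 = (r - s - 1) / 2 := by omega
    have hF1 : F t w p m (r, s)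
        = sg r s * (-1:ℂ) ^ ((r - s - 1)/2) * w ^ Eexp t p m (r, s) := if_pos h
    have hF2 : F t w (p+2*t) m (r-1, s-1)
        = sg (r-1) (s-1) * (-1:ℂ) ^ ((r - s - 1)/2) * w ^ Eexp t (p+2*t) m (r-1, s-1) := by
      rw [show F t w (p+2*t) m (r-1, s-1) = sg (r-1) (s-1) * (-1:ℂ) ^ ((r-1-(s-1)-1)/2)
        * w ^ Eexp t (p+2*t) m (r-1, s-1) from if_pos hpar', hk]
    rw [hF1, hF2, hE, zpow_add₀ hw, sg_sub r s h]
    rcases eq_or_ne r 0 with hr | hr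
    · subst hr
      have hs : s % 2 ≠ 0 := by omega
      have hsne : s ≠ 0 := by omega
      rw [show B1 w p m ((0:ℤ), s) = (-1:ℂ) ^ ((-s-1)/2) * w ^ (s^2 + 4*(p-m)*s)
          from if_pos ⟨rfl, hs⟩,
        show B2 w p m ((0:ℤ), s) = 0 from if_neg (by rintro ⟨h0, _⟩; exact hsne h0)]
      rw [if_pos rfl, if_neg hsne]
      have e1 : s^2 + 4*(p-m)*s = 8*(p+t) + Eexp t (p+2*t) m (0-1, s-1) := by
        simp only [Eexp]; ring
      have e2 : (-s-1)/2 = (0-s-1)/2 := by omega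
      rw [e1, e2, zpow_add₀ hw]
      ring
    · rcases eq_or_ne s 0 with hs | hs
      · subst hs
        have hr2 : r % 2 ≠ 0 := by omega
        rw [show B2 w p m (r, (0:ℤ)) = (-1:ℂ) ^ ((r-1)/2) * w ^ (r^2 + 4*(p+m)*r)
            from if_pos ⟨rfl, hr2⟩,
          show B1 w p m (r, (0:ℤ)) = 0 from if_neg (by rintro ⟨h0, _⟩; exact hr h0)]
        rw [if_neg hr, if_pos rfl]
        have e1 : r^2 + 4*(p+m)*r = 8*(p+t) + Eexp t (p+2*t) m (r-1, 0-1) := by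
          simp only [Eexp]; ring
        have e2 : (r-1)/2 = (r-0-1)/2 := by omega
        rw [e1, e2, zpow_add₀ hw]
        ring
      · rw [show B1 w p m (r, s) = 0 from if_neg (by rintro ⟨h0, _⟩; exact hr h0),
          show B2 w p m (r, s) = 0 from if_neg (by rintro ⟨h0, _⟩; exact hs h0),
          if_neg hr, if_neg hs]
        ring

lemma neg_one_zpow_add (a b : ℤ) : (-1:ℂ) ^ (a+b) = (-1:ℂ) ^ a * (-1:ℂ) ^ b :=
  zpow_add₀ (by norm_num) a b

lemma neg_one_zpow_inv (k : ℤ) : ((-1:ℂ) ^ k)⁻¹ = (-1:ℂ) ^ k :=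
  inv_eq_of_mul_eq_one_right (by
    rw [← neg_one_zpow_add]; exact Even.neg_one_zpow ⟨k, by ring⟩)

lemma neg_one_zpow_even (d : ℤ) : (-1:ℂ) ^ (2*d) = 1 :=
  Even.neg_one_zpow ⟨d, by ring⟩

lemma summable_B1 (w : ℂ) (hw0 : 0 < ‖w‖) (hw1 : ‖w‖ < 1) (p m : ℤ) :
    Summable (B1 w p m) := by
  set x := ‖w‖ with hx
  set C : ℤ := (|4*(p-m)|+1)^2 with hC
  apply Summable.of_norm_bounded
    (g := fun rs : ℤ × ℤ => (x ^ (-C) * x ^ rs.1.natAbs) * x ^ rs.2.natAbs)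
  · have h := (summable_majorant hw0.le hw1 (x ^ (-C)))
    refine h.congr fun rs => by ring
  rintro ⟨r, s⟩
  rw [B1]
  split_ifs with hcond
  · obtain ⟨hr0, hs⟩ := hcond
    have hEb : |s| - C ≤ s^2 + 4*(p-m)*s := by
      have := one_dim_bound (4*(p-m)) s
      rw [← hC] at this; linarith
    have hb : ‖(-1:ℂ) ^ ((-s-1)/2) * w ^ (s^2 + 4*(p-m)*s)‖ = x ^ (s^2 + 4*(p-m)*s) := by
      rw [norm_mul, norm_zpow, norm_zpow, ← hx]
      norm_num
    rw [hb]
    calc x ^ (s^2 + 4*(p-m)*s) ≤ x ^ (|s| - C) :=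
          zpow_le_zpow_right_of_le_one₀ hw0 hw1.le hEb
      _ = (x ^ (-C) * x ^ r.natAbs) * x ^ s.natAbs := by
          rw [show |s| - C = -C + ((r.natAbs:ℤ) + (s.natAbs:ℤ)) by
            rw [Int.abs_eq_natAbs, show r.natAbs = 0 by rw [show r = 0 from hr0]; rfl]
            push_cast; ring]
          rw [zpow_add₀ (ne_of_gt hw0), zpow_add₀ (ne_of_gt hw0), zpow_natCast, zpow_natCast,
            mul_assoc]
  · simp only [norm_zero]
    positivity

lemma summable_B2 (w : ℂ) (hw0 : 0 < ‖w‖) (hw1 : ‖w‖ < 1) (p m : ℤ) :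
    Summable (B2 w p m) := by
  set x := ‖w‖ with hx
  set C : ℤ := (|4*(p+m)|+1)^2 with hC
  apply Summable.of_norm_bounded
    (g := fun rs : ℤ × ℤ => (x ^ (-C) * x ^ rs.2.natAbs) * x ^ rs.1.natAbs)
  · have h := (summable_majorant hw0.le hw1 (x ^ (-C)))
    refine h.congr fun rs => by ring
  rintro ⟨r, s⟩
  rw [B2]
  split_ifs with hcond
  · obtain ⟨hs0, hr⟩ := hcond
    have hEb : |r| - C ≤ r^2 + 4*(p+m)*r := by
      have := one_dim_bound (4*(p+m)) r
      rw [← hC] at this; linarith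
    have hb : ‖(-1:ℂ) ^ ((r-1)/2) * w ^ (r^2 + 4*(p+m)*r)‖ = x ^ (r^2 + 4*(p+m)*r) := by
      rw [norm_mul, norm_zpow, norm_zpow, ← hx]
      norm_num
    rw [hb]
    calc x ^ (r^2 + 4*(p+m)*r) ≤ x ^ (|r| - C) :=
          zpow_le_zpow_right_of_le_one₀ hw0 hw1.le hEb
      _ = (x ^ (-C) * x ^ s.natAbs) * x ^ r.natAbs := by
          rw [show |r| - C = -C + ((s.natAbs:ℤ) + (r.natAbs:ℤ)) by
            rw [Int.abs_eq_natAbs, show s.natAbs = 0 by rw [show s = 0 from hs0]; rfl]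
            push_cast; ring]
          rw [zpow_add₀ (ne_of_gt hw0), zpow_add₀ (ne_of_gt hw0), zpow_natCast, zpow_natCast,
            mul_assoc]
  · simp only [norm_zero]
    positivity

lemma tsum_B1 (w : ℂ) (p m : ℤ) : ∑' rs : ℤ × ℤ, B1 w p m rs = 0 := by
  have hinj : Function.Injective (fun s : ℤ => ((0 : ℤ), s)) := by
    intro a b hab; simpa using hab
  have hsupp : Function.support (B1 w p m) ⊆ Set.range (fun s : ℤ => ((0:ℤ), s)) := by
    rintro ⟨r, s⟩ hrs
    have hr : r = 0 := by
      by_contra hr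
      exact hrs (if_neg (by rintro ⟨h0, _⟩; exact hr h0))
    exact ⟨s, by simp [hr]⟩
  rw [← hinj.tsum_eq hsupp]
  have key : ∀ s : ℤ, B1 w p m (0, -(4*(p-m)) - s) = - B1 w p m (0, s) := by
    intro s
    by_cases hs : s % 2 = 0
    · rw [show B1 w p m (0, s) = 0 from if_neg (by rintro ⟨_, h1⟩; exact h1 hs),
        show B1 w p m (0, -(4*(p-m)) - s) = 0 from if_neg (by rintro ⟨_, h1⟩; omega)]
      simp
    · obtain ⟨k, hk⟩ : ∃ k, s = 2*k+1 := ⟨(s-1)/2, by omega⟩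
      rw [show B1 w p m (0, s) = (-1:ℂ) ^ ((-s-1)/2) * w ^ (s^2 + 4*(p-m)*s)
          from if_pos ⟨rfl, hs⟩,
        show B1 w p m (0, -(4*(p-m)) - s)
          = (-1:ℂ) ^ ((-(-(4*(p-m)) - s)-1)/2) * w ^ ((-(4*(p-m)) - s)^2
              + 4*(p-m)*(-(4*(p-m)) - s)) from if_pos ⟨rfl, by omega⟩]
      have eexp : (-(4*(p-m)) - s)^2 + 4*(p-m)*(-(4*(p-m)) - s) = s^2 + 4*(p-m)*s := by ring
      have ei1 : (-(-(4*(p-m)) - s)-1)/2 = 2*(p-m) + k := by omega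
      have ei2 : (-s-1)/2 = -k + (-1) := by omega
      rw [eexp, ei1, ei2, neg_one_zpow_add, neg_one_zpow_even, one_mul,
        neg_one_zpow_add, zpow_neg, neg_one_zpow_inv]
      norm_num
  have h2 : ∑' s : ℤ, B1 w p m (0, s) = ∑' s : ℤ, B1 w p m (0, -(4*(p-m)) - s) :=
    ((Equiv.subLeft (-(4*(p-m)))).tsum_eq (fun s => B1 w p m (0, s))).symm
  have h3 : ∑' s : ℤ, B1 w p m (0, -(4*(p-m)) - s) = - ∑' s : ℤ, B1 w p m (0, s) := by
    rw [show (fun s : ℤ => B1 w p m (0, -(4*(p-m)) - s))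
        = fun s : ℤ => - B1 w p m (0, s) from funext key]
    exact tsum_neg
  have h4 := h2.trans h3
  linear_combination h4 / 2

lemma tsum_B2 (w : ℂ) (p m : ℤ) : ∑' rs : ℤ × ℤ, B2 w p m rs = 0 := by
  have hinj : Function.Injective (fun r : ℤ => (r, (0 : ℤ))) := by
    intro a b hab; simpa using hab
  have hsupp : Function.support (B2 w p m) ⊆ Set.range (fun r : ℤ => (r, (0:ℤ))) := by
    rintro ⟨r, s⟩ hrs
    have hs : s = 0 := by
      by_contra hs
      exact hrs (if_neg (by rintro ⟨h0, _⟩; exact hs h0))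
    exact ⟨r, by simp [hs]⟩
  rw [← hinj.tsum_eq hsupp]
  have key : ∀ r : ℤ, B2 w p m (-(4*(p+m)) - r, 0) = - B2 w p m (r, 0) := by
    intro r
    by_cases hr : r % 2 = 0
    · rw [show B2 w p m (r, 0) = 0 from if_neg (by rintro ⟨_, h1⟩; exact h1 hr),
        show B2 w p m (-(4*(p+m)) - r, 0) = 0 from if_neg (by rintro ⟨_, h1⟩; omega)]
      simp
    · obtain ⟨k, hk⟩ : ∃ k, r = 2*k+1 := ⟨(r-1)/2, by omega⟩
      rw [show B2 w p m (r, 0) = (-1:ℂ) ^ ((r-1)/2) * w ^ (r^2 + 4*(p+m)*r)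
          from if_pos ⟨rfl, hr⟩,
        show B2 w p m (-(4*(p+m)) - r, 0)
          = (-1:ℂ) ^ (((-(4*(p+m)) - r)-1)/2) * w ^ ((-(4*(p+m)) - r)^2
              + 4*(p+m)*(-(4*(p+m)) - r)) from if_pos ⟨rfl, by omega⟩]
      have eexp : (-(4*(p+m)) - r)^2 + 4*(p+m)*(-(4*(p+m)) - r) = r^2 + 4*(p+m)*r := by ring
      have ei1 : ((-(4*(p+m)) - r)-1)/2 = 2*(-(p+m)) + (-k + (-1)) := by omega
      have ei2 : (r-1)/2 = k := by omega
      rw [eexp, ei1, ei2, neg_one_zpow_add, neg_one_zpow_even, one_mul,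
        neg_one_zpow_add, zpow_neg, neg_one_zpow_inv]
      norm_num
  have h2 : ∑' r : ℤ, B2 w p m (r, 0) = ∑' r : ℤ, B2 w p m (-(4*(p+m)) - r, 0) :=
    ((Equiv.subLeft (-(4*(p+m)))).tsum_eq (fun r => B2 w p m (r, 0))).symm
  have h3 : ∑' r : ℤ, B2 w p m (-(4*(p+m)) - r, 0) = - ∑' r : ℤ, B2 w p m (r, 0) := by
    rw [show (fun r : ℤ => B2 w p m (-(4*(p+m)) - r, 0))
        = fun r : ℤ => - B2 w p m (r, 0) from funext key]
    exact tsum_neg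
  have h4 := h2.trans h3
  linear_combination h4 / 2

def shiftEquiv : ℤ × ℤ ≃ ℤ × ℤ where
  toFun rs := (rs.1 - 1, rs.2 - 1)
  invFun rs := (rs.1 + 1, rs.2 + 1)
  left_inv := by rintro ⟨r, s⟩; simp
  right_inv := by rintro ⟨r, s⟩; simp

end Stmt12aux

open Stmt12aux in
set_option maxHeartbeats 1000000 in
theorem stmt12 (t : ℤ) (ht : 1 ≤ t) (w : ℂ)
    (hw0 : 0 < ‖w‖) (hw1 : ‖w‖ < 1) (p m : ℤ) :
    ThetaPM t w p m = w ^ (8 * (p + t)) * ThetaPM t w (p + 2*t) m := by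
  have hw : w ≠ 0 := by
    intro h0; rw [h0] at hw0; simp at hw0
  have hF' := summable_F t ht w hw0 hw1 (p+2*t) m
  have hg : Summable (fun rs : ℤ × ℤ => w ^ (8*(p+t)) * F t w (p+2*t) m (rs.1 - 1, rs.2 - 1)) := by
    apply Summable.mul_left
    exact shiftEquiv.summable_iff.mpr hF'
  have hB1 := summable_B1 w hw0 hw1 p m
  have hB2 := summable_B2 w hw0 hw1 p m
  rw [theta_eq, theta_eq]
  rw [tsum_congr (decomp t w hw p m)]
  rw [Summable.tsum_add (hg.add hB1) hB2, Summable.tsum_add hg hB1, tsum_B1 w p m, tsum_B2 w p m,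
    add_zero, add_zero, tsum_mul_left]
  congr 1
  exact shiftEquiv.tsum_eq (F t w (p+2*t) m)
end

section
/- Let t ≥ 1 be an integer and let w be a complex number with 0 < |w| < 1. With Θ_{p,m} := ∑_{(r,s)∈ℤ², r≢s (mod 2)} sg(r,s)·(-1)^{(r-s-1)/2} w^{r² + 2(4t-1)rs + s² + 4(p+m)r + 4(p-m)s} for integers p, m, one has Θ_{-p,m} = -Θ_{p,m} and Θ_{p,-m} = -Θ_{p,m}. In particular Θ_{0,m} = 0 and Θ_{p,0} = 0. -/
set_option maxHeartbeats 1000000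

namespace Stmt13Aux
abbrev S := {rs : ℤ × ℤ // rs.1 % 2 ≠ rs.2 % 2}
def E (t p m r s : ℤ) : ℤ :=
  r^2 + 2*(4*t-1)*r*s + s^2 + 4*(p+m)*r + 4*(p-m)*s
noncomputable def F (t : ℤ) (w : ℂ) (p m : ℤ) (x : S) : ℂ :=
  sg x.1.1 x.1.2 * (-1:ℂ)^((x.1.1 - x.1.2 - 1)/2) * w ^ E t p m x.1.1 x.1.2

lemma neg_one_zpow_eq {a b : ℤ} (h : (a - b) % 2 = 0) : (-1:ℂ)^a = (-1:ℂ)^b := by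
  have hab : a = b + (a - b) := by ring
  rw [hab, zpow_add₀ (by norm_num : (-1:ℂ) ≠ 0), Even.neg_one_zpow (Int.even_iff.2 h), mul_one]

lemma neg_one_zpow_neg {a b : ℤ} (h : (a - b) % 2 = 1) : (-1:ℂ)^a = -(-1:ℂ)^b := by
  have hab : a = b + (a - b) := by ring
  rw [hab, zpow_add₀ (by norm_num : (-1:ℂ) ≠ 0), Odd.neg_one_zpow (Int.odd_iff.2 h)]
  ring

lemma sgnStar_neg {r : ℤ} (hr : r ≠ 0) : sgnStar (-r) = -sgnStar r := by
  unfold sgnStar; split_ifs <;> omega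

lemma quad_lb (x c : ℤ) (hx : 0 ≤ x) (hc : 0 ≤ c) : x - c^2 ≤ x^2 - c*x := by
  rcases le_or_gt x c with h | h <;> nlinarith

lemma coord_lb (r a C : ℤ) (hC : 0 ≤ C) (h : |a| ≤ C) :
    |r| - C^2 ≤ r^2 + a*r := by
  have h1 : -(C*|r|) ≤ a*r := by
    have : -(|a| * |r|) ≤ a * r := by
      rw [← abs_mul]; exact neg_abs_le _
    have h2 : |a| * |r| ≤ C * |r| := mul_le_mul_of_nonneg_right h (abs_nonneg r)
    omega
  have h3 := quad_lb |r| C (abs_nonneg r) hC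
  have h4 : r^2 = |r|^2 := (sq_abs r).symm
  nlinarith

lemma summable_geom_int {ρ : ℝ} (h0 : 0 ≤ ρ) (h1 : ρ < 1) :
    Summable (fun r : ℤ => ρ ^ (|r| : ℤ)) := by
  have key : ∀ r : ℤ, ρ ^ (|r| : ℤ) = ρ ^ r.natAbs := by
    intro r
    rw [Int.abs_eq_natAbs, zpow_natCast]
  simp only [key]
  apply Summable.of_nat_of_neg
  · simpa using summable_geometric_of_lt_one h0 h1
  · simpa using summable_geometric_of_lt_one h0 h1

lemma summable_F (t : ℤ) (ht : 1 ≤ t) (w : ℂ)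
    (hw0 : 0 < ‖w‖) (hw1 : ‖w‖ < 1) (p m : ℤ) :
    Summable (F t w p m) := by
  have hwne : w ≠ 0 := norm_pos_iff.mp hw0
  set ρ := ‖w‖ with hρ
  clear_value ρ
  set C : ℤ := 4*(|p| + |m|) with hC
  clear_value C
  have hC0 : 0 ≤ C := by rw [hC]; positivity
  -- bound function on ℤ × ℤ
  set b : ℤ × ℤ → ℝ := fun rs =>
    if (0 ≤ rs.1 ↔ 0 ≤ rs.2) then ρ ^ (E t p m rs.1 rs.2) else 0 with hb
  have hbnn : ∀ rs, 0 ≤ b rs := by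
    intro rs; rw [hb]; dsimp only
    split_ifs
    · positivity
    · exact le_rfl
  -- exponent lower bound when signs agree
  have hE : ∀ r s : ℤ, (0 ≤ r ↔ 0 ≤ s) → |r| + |s| - 2*C^2 ≤ E t p m r s := by
    intro r s hrs
    have hrs0 : 0 ≤ r * s := by
      rcases le_or_gt 0 r with h | h
      · exact mul_nonneg h (hrs.1 h)
      · have hs : s < 0 := by
          by_contra hs
          exact absurd (hrs.2 (not_lt.1 hs)) (not_le.2 h)
        have := mul_nonneg (neg_nonneg.2 h.le) (neg_nonneg.2 hs.le)
        nlinarith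
    have hcross : 0 ≤ 2*(4*t-1)*(r*s) := by
      have : (0:ℤ) ≤ 2*(4*t-1) := by omega
      exact mul_nonneg this hrs0
    have hap : |4*(p+m)| ≤ C := by
      rw [hC]
      have := abs_add_le p m
      have h0 : |4*(p+m)| = 4*|p+m| := by rw [abs_mul]; norm_num
      omega
    have ham : |4*(p-m)| ≤ C := by
      rw [hC]
      have := abs_sub p m
      have h0 : |4*(p-m)| = 4*|p-m| := by rw [abs_mul]; norm_num
      omega
    have h1 := coord_lb r (4*(p+m)) C hC0 hap
    have h2 := coord_lb s (4*(p-m)) C hC0 ham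
    rw [E]
    linarith [h1, h2, hcross]
  -- b is summable
  have hbsum : Summable b := by
    have hg : Summable (fun r : ℤ => ρ ^ (|r| : ℤ)) := summable_geom_int (by positivity) hw1
    have hgnn : ∀ r : ℤ, 0 ≤ ρ ^ (|r| : ℤ) := fun r => by positivity
    have hprod : Summable (fun rs : ℤ × ℤ => ρ ^ (|rs.1| : ℤ) * ρ ^ (|rs.2| : ℤ)) :=
      hg.mul_of_nonneg hg hgnn hgnn
    have := hprod.mul_left (ρ ^ (-(2*C^2)))
    apply this.of_nonneg_of_le hbnn
    intro rs
    rw [hb]; dsimp only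
    split_ifs with h
    · calc ρ ^ (E t p m rs.1 rs.2) ≤ ρ ^ (|rs.1| + |rs.2| - 2*C^2) :=
          zpow_le_zpow_right_of_le_one₀ hw0 hw1.le (hE rs.1 rs.2 h)
        _ = ρ ^ (-(2*C^2)) * (ρ ^ (|rs.1| : ℤ) * ρ ^ (|rs.2| : ℤ)) := by
          rw [← zpow_add₀ (ne_of_gt hw0), ← zpow_add₀ (ne_of_gt hw0)]
          congr 1
          ring
    · positivity
  -- transfer to subtype and compare
  have hbsub : Summable (fun x : S => b x.1) := hbsum.comp_injective Subtype.coe_injective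
  apply Summable.of_norm_bounded hbsub
  intro x
  obtain ⟨⟨r, s⟩, hx⟩ := x
  rw [F, hb]; dsimp only
  split_ifs with h
  · have hsg : ‖sg r s‖ = 1 := by
      rw [sg, sgnStar, sgnStar]
      rcases le_or_gt 0 r with h1 | h1
      · rw [if_pos h1, if_pos (h.1 h1)]; norm_num
      · rw [if_neg (not_le.2 h1), if_neg]
        · norm_num
        · intro hs; exact absurd (h.2 hs) (not_le.2 h1)
    rw [norm_mul, norm_mul]
    have h2 : ‖(-1:ℂ)^((r - s - 1)/2)‖ = 1 := by
      rw [norm_zpow]; norm_num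
    have h3 : ‖w ^ E t p m r s‖ = ρ ^ E t p m r s := by
      rw [norm_zpow, ← hρ]
    rw [h2, h3]
    simp only [hsg]
    simp
  · have : sgnStar r + sgnStar s = 0 := by
      rw [sgnStar, sgnStar]
      split_ifs with h1 h2 h2 <;>
        first
          | rfl
          | omega
          | (exact absurd (iff_of_true h1 h2) h)
          | (exact absurd (iff_of_false h1 h2) h)
    rw [sg, this]
    simp


lemma theta_eq (t : ℤ) (w : ℂ) (p m : ℤ) :
    ThetaPM t w p m = ∑' x : S, F t w p m x := rfl

def swapS : S ≃ S :=
  Function.Involutive.toPerm (fun x => ⟨(x.1.2, x.1.1), Ne.symm x.2⟩) (fun _ => rfl)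

def negS : S ≃ S :=
  Function.Involutive.toPerm
    (fun x => ⟨(-x.1.2, -x.1.1), by
      have h := x.2
      show (-x.1.2) % 2 ≠ (-x.1.1) % 2
      omega⟩)
    (fun x => Subtype.ext (by show (- -x.1.1, - -x.1.2) = x.1; simp))

def sigFun (p m : ℤ) : S → S := fun x =>
  if h1 : x.1.1 = 0 then
    ⟨(0, -4*(p-m) - x.1.2), by
      have h := x.2
      show (0:ℤ) % 2 ≠ (-4*(p-m) - x.1.2) % 2
      omega⟩
  else if h2 : x.1.2 = 0 then
    ⟨(-4*(p+m) - x.1.1, 0), by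
      have h := x.2
      show (-4*(p+m) - x.1.1) % 2 ≠ (0:ℤ) % 2
      omega⟩
  else x

lemma sig_val_left (p m : ℤ) (x : S) (h : x.1.1 = 0) :
    (sigFun p m x).1 = (0, -4*(p-m) - x.1.2) := by
  rw [sigFun, dif_pos h]

lemma sig_val_right (p m : ℤ) (x : S) (h1 : x.1.1 ≠ 0) (h2 : x.1.2 = 0) :
    (sigFun p m x).1 = (-4*(p+m) - x.1.1, 0) := by
  rw [sigFun, dif_neg h1, dif_pos h2]

lemma sig_val_id (p m : ℤ) (x : S) (h1 : x.1.1 ≠ 0) (h2 : x.1.2 ≠ 0) :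
    sigFun p m x = x := by
  rw [sigFun, dif_neg h1, dif_neg h2]

lemma sig_invol (p m : ℤ) : Function.Involutive (sigFun p m) := by
  intro x
  rcases eq_or_ne x.1.1 0 with h1 | h1
  · have v1 := sig_val_left p m x h1
    have v2 : (sigFun p m (sigFun p m x)).1 = (0, -4*(p-m) - (sigFun p m x).1.2) :=
      sig_val_left p m _ (by rw [v1])
    apply Subtype.ext
    rw [v2, v1]
    rw [Prod.mk.injEq]
    refine ⟨h1.symm, ?_⟩
    have : x.1 = (x.1.1, x.1.2) := rfl
    simp only [Prod.snd]
    ring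
  · rcases eq_or_ne x.1.2 0 with h2 | h2
    · have v1 := sig_val_right p m x h1 h2
      have hodd := x.2
      have v2 : (sigFun p m (sigFun p m x)).1 = (-4*(p+m) - (sigFun p m x).1.1, 0) := by
        apply sig_val_right p m _ _ (by rw [v1])
        rw [v1]
        show -4*(p+m) - x.1.1 ≠ 0
        omega
      apply Subtype.ext
      rw [v2, v1]
      rw [Prod.mk.injEq]
      refine ⟨?_, h2.symm⟩
      simp only [Prod.fst]
      ring
    · rw [sig_val_id p m x h1 h2, sig_val_id p m x h1 h2]

noncomputable def Gfun (t : ℤ) (w : ℂ) (p m : ℤ) (x : S) : ℂ :=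
  if x.1.1 = 0 ∨ x.1.2 = 0 then
    (-1:ℂ)^((x.1.1 - x.1.2 - 1)/2) * w ^ E t p m x.1.1 x.1.2
  else 0

lemma F_swap (t : ℤ) (w : ℂ) (p m : ℤ) (x : S) :
    F t w p (-m) (swapS x) = -(F t w p m x) := by
  obtain ⟨⟨r, s⟩, hx⟩ := x
  have hodd : r % 2 ≠ s % 2 := hx
  show sg s r * (-1:ℂ)^((s - r - 1)/2) * w ^ E t p (-m) s r =
    -(sg r s * (-1:ℂ)^((r - s - 1)/2) * w ^ E t p m r s)
  have h1 : sg s r = sg r s := by rw [sg, sg, add_comm]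
  have h2 : E t p (-m) s r = E t p m r s := by rw [E, E]; ring
  have h3 : (-1:ℂ)^((s - r - 1)/2) = -(-1:ℂ)^((r - s - 1)/2) :=
    neg_one_zpow_neg (by omega)
  rw [h1, h2, h3]; ring

lemma sg_neg_neg (r s : ℤ) (h : r % 2 ≠ s % 2) :
    sg (-s) (-r) = -(sg r s) + (if r = 0 ∨ s = 0 then 1 else 0) := by
  rcases eq_or_ne r 0 with h1 | h1
  · subst h1
    have hs : s ≠ 0 := by omega
    rw [if_pos (Or.inl rfl), sg, sg, neg_zero, sgnStar_neg hs]
    have h0 : sgnStar 0 = 1 := rfl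
    rw [h0]
    push_cast
    ring
  · rcases eq_or_ne s 0 with h2 | h2
    · subst h2
      rw [if_pos (Or.inr rfl), sg, sg, neg_zero, sgnStar_neg h1]
      have h0 : sgnStar 0 = 1 := rfl
      rw [h0]
      push_cast
      ring
    · rw [if_neg (by tauto), sg, sg, sgnStar_neg h1, sgnStar_neg h2]
      push_cast
      ring

lemma F_negneg (t : ℤ) (w : ℂ) (p m : ℤ) (x : S) :
    F t w (-p) m (negS x) = -(F t w p m x) + Gfun t w p m x := by
  obtain ⟨⟨r, s⟩, hx⟩ := x
  have hodd : r % 2 ≠ s % 2 := hx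
  show sg (-s) (-r) * (-1:ℂ)^((-s - -r - 1)/2) * w ^ E t (-p) m (-s) (-r) =
    -(sg r s * (-1:ℂ)^((r - s - 1)/2) * w ^ E t p m r s) + Gfun t w p m ⟨(r, s), hx⟩
  have h2 : E t (-p) m (-s) (-r) = E t p m r s := by rw [E, E]; ring
  have h3 : (-s - -r - 1)/2 = (r - s - 1)/2 := by omega
  have h4 : Gfun t w p m ⟨(r, s), hx⟩ =
      (if r = 0 ∨ s = 0 then 1 else 0) * ((-1:ℂ)^((r - s - 1)/2) * w ^ E t p m r s) := by
    rw [Gfun]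
    split_ifs <;> ring
  rw [sg_neg_neg r s hodd, h2, h3, h4]
  ring

lemma G_sig (t : ℤ) (w : ℂ) (p m : ℤ) (x : S) :
    Gfun t w p m (sigFun p m x) = -(Gfun t w p m x) := by
  obtain ⟨⟨r, s⟩, hx⟩ := x
  have hodd : r % 2 ≠ s % 2 := hx
  rcases eq_or_ne r 0 with h1 | h1
  · subst h1
    have hs : s ≠ 0 := by omega
    have v1 : (sigFun p m ⟨((0:ℤ), s), hx⟩).1 = (0, -4*(p-m) - s) := sig_val_left p m _ rfl
    rw [Gfun, Gfun, v1]
    simp only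
    simp only [true_or, if_true]
    have hE : E t p m 0 (-4*(p-m) - s) = E t p m 0 s := by rw [E, E]; ring
    have hsign : (-1:ℂ)^((0 - (-4*(p-m) - s) - 1)/2) = -(-1:ℂ)^((0 - s - 1)/2) :=
      neg_one_zpow_neg (by omega)
    rw [hE, hsign]
    ring
  · rcases eq_or_ne s 0 with h2 | h2
    · subst h2
      have v1 : (sigFun p m ⟨(r, (0:ℤ)), hx⟩).1 = (-4*(p+m) - r, 0) :=
        sig_val_right p m _ h1 rfl
      rw [Gfun, Gfun, v1]
      simp only
      simp only [or_true, if_true]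
      have hE : E t p m (-4*(p+m) - r) 0 = E t p m r 0 := by rw [E, E]; ring
      have hsign : (-1:ℂ)^((-4*(p+m) - r - 0 - 1)/2) = -(-1:ℂ)^((r - 0 - 1)/2) :=
        neg_one_zpow_neg (by omega)
      rw [hE, hsign]
      ring
    · rw [sig_val_id p m _ h1 h2, Gfun]
      simp only
      rw [if_neg (by tauto)]
      simp

lemma theta_swap (t : ℤ) (w : ℂ) (p m : ℤ) :
    ThetaPM t w p (-m) = -ThetaPM t w p m := by
  rw [theta_eq, theta_eq]
  calc ∑' x : S, F t w p (-m) x = ∑' x : S, F t w p (-m) (swapS x) :=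
        (Equiv.tsum_eq swapS (F t w p (-m))).symm
    _ = ∑' x : S, -(F t w p m x) := tsum_congr (fun x => F_swap t w p m x)
    _ = -∑' x : S, F t w p m x := tsum_neg

lemma theta_negp (t : ℤ) (ht : 1 ≤ t) (w : ℂ)
    (hw0 : 0 < ‖w‖) (hw1 : ‖w‖ < 1) (p m : ℤ) :
    ThetaPM t w (-p) m = -ThetaPM t w p m := by
  have hsum := summable_F t ht w hw0 hw1 p m
  have hsum2 := summable_F t ht w hw0 hw1 (-p) m
  have hGsum : Summable (Gfun t w p m) := by
    have heq : Gfun t w p m = fun x => F t w (-p) m (negS x) + F t w p m x := by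
      funext x
      rw [F_negneg t w p m x]
      ring
    rw [heq]
    exact (hsum2.comp_injective negS.injective).add hsum
  have hG0 : ∑' x : S, Gfun t w p m x = 0 := by
    have hperm : ∑' x : S, Gfun t w p m (sigFun p m x) = ∑' x : S, Gfun t w p m x :=
      Equiv.tsum_eq ((sig_invol p m).toPerm) (Gfun t w p m)
    rw [tsum_congr (fun x => G_sig t w p m x), tsum_neg] at hperm
    exact add_self_eq_zero.mp (by linear_combination -hperm)
  rw [theta_eq, theta_eq]
  calc ∑' x : S, F t w (-p) m x = ∑' x : S, F t w (-p) m (negS x) :=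
        (Equiv.tsum_eq negS (F t w (-p) m)).symm
    _ = ∑' x : S, (-(F t w p m x) + Gfun t w p m x) :=
        tsum_congr (fun x => F_negneg t w p m x)
    _ = (∑' x : S, -(F t w p m x)) + ∑' x : S, Gfun t w p m x :=
        Summable.tsum_add hsum.neg hGsum
    _ = -∑' x : S, F t w p m x := by rw [hG0, tsum_neg, add_zero]

end Stmt13Aux

theorem stmt13 (t : ℤ) (ht : 1 ≤ t) (w : ℂ)
    (hw0 : 0 < ‖w‖) (hw1 : ‖w‖ < 1) (p m : ℤ) :
    ThetaPM t w (-p) m = -ThetaPM t w p m ∧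
    ThetaPM t w p (-m) = -ThetaPM t w p m ∧
    ThetaPM t w 0 m = 0 ∧
    ThetaPM t w p 0 = 0 := by
  refine ⟨Stmt13Aux.theta_negp t ht w hw0 hw1 p m, Stmt13Aux.theta_swap t w p m, ?_, ?_⟩
  · have h := Stmt13Aux.theta_negp t ht w hw0 hw1 0 m
    rw [neg_zero] at h
    exact add_self_eq_zero.mp (by linear_combination h)
  · have h := Stmt13Aux.theta_swap t w p 0
    rw [neg_zero] at h
    exact add_self_eq_zero.mp (by linear_combination h)
end
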